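/- Let Γ₁, …, Γₙ be nonzero real numbers. For each k ∈ ℕ let s^k = (s^k₁, …, s^kₙ) be a configuration of pairwise distinct unit vectors in ℝ³ that is a fixed point of the n-vortex problem on the round unit sphere, i.e. Σ_{j≠i} Γⱼ (s^kⱼ × s^kᵢ)/‖s^kᵢ − s^kⱼ‖² = 0 for every i. Suppose that for every i the sequence s^kᵢ converges to some s*ᵢ ∈ ℝ³ as k → ∞, and that there is a subset Λ ⊆ {1, …, n} with |Λ| ≥ 2 and a point s* such that s*ᵢ = s* for all i ∈ Λ while s*_l ≠ s* for all l ∉ Λ. Then Σ_{i,j ∈ Λ, i≠j} ΓᵢΓⱼ = 0. -/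

import Mathlib

/-- The cross product on `ℝ³` viewed as the Euclidean space `EuclideanSpace ℝ (Fin 3)`. -/
noncomputable def cross (u v : EuclideanSpace ℝ (Fin 3)) : EuclideanSpace ℝ (Fin 3) :=
  (WithLp.equiv 2 (Fin 3 → ℝ)).symm
    (crossProduct ((WithLp.equiv 2 (Fin 3 → ℝ)) u) ((WithLp.equiv 2 (Fin 3 → ℝ)) v))

/-!
Pair the fixed-point equation of each vortex `i ∈ Λ` with the rotation field `s* × zᵢ` and
weight it by `Γᵢ`. On the unit sphere the contribution of vortex `j` splits into a part with the
singular factor `1 / ‖zᵢ - zⱼ‖²` that is antisymmetric in `(i, j)`, and the regular part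
`ΓᵢΓⱼ ⟪zᵢ, s*⟫ / 2`. Summed over the cluster, the singular parts cancel. The contributions of
vortices outside `Λ` stay away from the singularity and tend to `0`, because `s* × s* = 0`, while
the regular parts tend to `½ ∑ ΓᵢΓⱼ`.
-/

open Filter Topology Finset
open scoped InnerProductSpace

lemma inner_cross_cross (u v w : EuclideanSpace ℝ (Fin 3)) :
    ⟪cross u v, cross w v⟫_ℝ = ⟪u, w⟫_ℝ * ⟪v, v⟫_ℝ - ⟪u, v⟫_ℝ * ⟪v, w⟫_ℝ := by
  have hdot : ∀ x y : EuclideanSpace ℝ (Fin 3),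
      ⟪x, y⟫_ℝ = WithLp.equiv 2 (Fin 3 → ℝ) x ⬝ᵥ WithLp.equiv 2 (Fin 3 → ℝ) y := by
    intro x y
    simp [PiLp.inner_apply, dotProduct, mul_comm]
  simp only [hdot, cross, Equiv.apply_symm_apply]
  exact cross_dot_cross _ _ _ _

lemma inner_cross_cross_of_norm_eq_one {u v : EuclideanSpace ℝ (Fin 3)} (hu : ‖u‖ = 1)
    (hv : ‖v‖ = 1) (w : EuclideanSpace ℝ (Fin 3)) :
    ⟪cross u v, cross w v⟫_ℝ = ⟪u - v, w⟫_ℝ + ‖u - v‖ ^ 2 / 2 * ⟪v, w⟫_ℝ := by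
  have huv : ⟪u, v⟫_ℝ = 1 - ‖u - v‖ ^ 2 / 2 := by
    rw [norm_sub_sq_real, hu, hv]; ring
  rw [inner_cross_cross, real_inner_self_eq_norm_sq, hv, huv, inner_sub_left]
  ring

lemma sum_univ_erase_eq_sum_erase_add_sum_compl {ι G : Type*} [Fintype ι] [DecidableEq ι]
    [AddCommGroup G] {s : Finset ι} {i : ι} (hi : i ∈ s) (f : ι → G) :
    ∑ j ∈ univ.erase i, f j = ∑ j ∈ s.erase i, f j + ∑ j ∈ sᶜ, f j := by
  rw [sum_erase_eq_sub (mem_univ i), sum_erase_eq_sub hi, ← sum_add_sum_compl s f]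
  abel

lemma sum_sum_erase_eq_zero_of_antisymm {ι G : Type*} [DecidableEq ι] [AddCommGroup G]
    [IsAddTorsionFree G] (s : Finset ι) {f : ι → ι → G} (hf : ∀ i j, f j i = -f i j) :
    ∑ i ∈ s, ∑ j ∈ s.erase i, f i j = 0 := by
  refine self_eq_neg.mp ?_
  calc ∑ i ∈ s, ∑ j ∈ s.erase i, f i j
      = ∑ j ∈ s, ∑ i ∈ s.erase j, f i j :=
        sum_comm' fun i j => by simp only [mem_erase]; tauto
    _ = -∑ i ∈ s, ∑ j ∈ s.erase i, f i j := by
        simp only [← sum_neg_distrib]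
        exact sum_congr rfl fun j _ => sum_congr rfl fun i _ => hf j i

section Interaction

variable {ι : Type*} (Γ : ι → ℝ) (c : EuclideanSpace ℝ (Fin 3)) (z : ι → EuclideanSpace ℝ (Fin 3))

noncomputable def interactionAlong (i j : ι) : ℝ :=
  Γ i * (Γ j / ‖z i - z j‖ ^ 2) * ⟪cross (z j) (z i), cross c (z i)⟫_ℝ

lemma sum_interactionAlong_eq_zero [Fintype ι] [DecidableEq ι] {i : ι}
    (hfix : ∑ j ∈ univ.erase i, (Γ j / ‖z i - z j‖ ^ 2) • cross (z j) (z i) = 0) :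
    ∑ j ∈ univ.erase i, interactionAlong Γ c z i j = 0 := by
  have h := congrArg (fun v => Γ i * ⟪v, cross c (z i)⟫_ℝ) hfix
  simpa only [interactionAlong, sum_inner, real_inner_smul_left, mul_sum, inner_zero_left,
    mul_zero, ← mul_assoc] using h

lemma interactionAlong_eq_of_norm_eq_one {i j : ι} (hi : ‖z i‖ = 1) (hj : ‖z j‖ = 1)
    (hij : z i ≠ z j) :
    interactionAlong Γ c z i j
      = Γ i * Γ j * (⟪z j - z i, c⟫_ℝ / ‖z i - z j‖ ^ 2 + ⟪z i, c⟫_ℝ / 2) := by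
  have hd : ‖z i - z j‖ ≠ 0 := norm_ne_zero_iff.mpr (sub_ne_zero.mpr hij)
  rw [interactionAlong, inner_cross_cross_of_norm_eq_one hj hi, norm_sub_rev (z j)]
  field_simp

lemma sum_sum_erase_interactionAlong [DecidableEq ι] (Λ : Finset ι)
    (hnorm : ∀ i, ‖z i‖ = 1) (hdist : ∀ i j, i ≠ j → z i ≠ z j) :
    ∑ i ∈ Λ, ∑ j ∈ Λ.erase i, interactionAlong Γ c z i j
      = ∑ i ∈ Λ, ∑ j ∈ Λ.erase i, Γ i * Γ j * ⟪z i, c⟫_ℝ / 2 := by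
  have hsplit : ∀ i, ∀ j ∈ Λ.erase i, interactionAlong Γ c z i j
      = Γ i * Γ j * (⟪z j - z i, c⟫_ℝ / ‖z i - z j‖ ^ 2) + Γ i * Γ j * ⟪z i, c⟫_ℝ / 2 := by
    intro i j hj
    rw [interactionAlong_eq_of_norm_eq_one Γ c z (hnorm i) (hnorm j)
      (hdist i j (ne_of_mem_erase hj).symm)]
    ring
  have hsing : ∑ i ∈ Λ, ∑ j ∈ Λ.erase i,
      Γ i * Γ j * (⟪z j - z i, c⟫_ℝ / ‖z i - z j‖ ^ 2) = 0 := by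
    refine sum_sum_erase_eq_zero_of_antisymm Λ fun i j => ?_
    rw [norm_sub_rev, ← neg_sub (z j), inner_neg_left]
    ring
  rw [sum_congr rfl fun i _ => sum_congr rfl (hsplit i)]
  simp only [sum_add_distrib, hsing, zero_add]

lemma cluster_balance [Fintype ι] [DecidableEq ι] (Λ : Finset ι) (hnorm : ∀ i, ‖z i‖ = 1)
    (hdist : ∀ i j, i ≠ j → z i ≠ z j)
    (hfix : ∀ i, ∑ j ∈ univ.erase i, (Γ j / ‖z i - z j‖ ^ 2) • cross (z j) (z i) = 0) :
    ∑ i ∈ Λ, ∑ j ∈ Λ.erase i, Γ i * Γ j * ⟪z i, c⟫_ℝ / 2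
      + ∑ i ∈ Λ, ∑ l ∈ Λᶜ, interactionAlong Γ c z i l = 0 := by
  rw [← sum_sum_erase_interactionAlong Γ c z Λ hnorm hdist, ← sum_add_distrib]
  refine sum_eq_zero fun i hi => ?_
  rw [← sum_univ_erase_eq_sum_erase_add_sum_compl hi]
  exact sum_interactionAlong_eq_zero Γ c z (hfix i)

lemma tendsto_interactionAlong_zero {z : ℕ → ι → EuclideanSpace ℝ (Fin 3)} {i l : ι}
    {p q : EuclideanSpace ℝ (Fin 3)} (hi : Tendsto (fun k => z k i) atTop (𝓝 p))
    (hl : Tendsto (fun k => z k l) atTop (𝓝 q)) (hpq : p ≠ q) :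
    Tendsto (fun k => interactionAlong Γ p (z k) i l) atTop (𝓝 0) := by
  have hd : ‖p - q‖ ^ 2 ≠ 0 := pow_ne_zero 2 (norm_ne_zero_iff.mpr (sub_ne_zero.mpr hpq))
  have hlim : Tendsto (fun k => Γ i * (Γ l / ‖z k i - z k l‖ ^ 2) *
      (⟪z k l, p⟫_ℝ * ⟪z k i, z k i⟫_ℝ - ⟪z k l, z k i⟫_ℝ * ⟪z k i, p⟫_ℝ)) atTop
      (𝓝 (Γ i * (Γ l / ‖p - q‖ ^ 2) * (⟪q, p⟫_ℝ * ⟪p, p⟫_ℝ - ⟪q, p⟫_ℝ * ⟪p, p⟫_ℝ))) :=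
    (tendsto_const_nhds.mul (tendsto_const_nhds.div ((hi.sub hl).norm.pow 2) hd)).mul
      (((hl.inner tendsto_const_nhds).mul (hi.inner hi)).sub
        ((hl.inner hi).mul (hi.inner tendsto_const_nhds)))
  rw [sub_self, mul_zero] at hlim
  simpa only [interactionAlong, inner_cross_cross] using hlim

end Interaction

theorem stmt12_general (n : ℕ) (Γ : Fin n → ℝ)
    (s : ℕ → Fin n → EuclideanSpace ℝ (Fin 3))
    (hnorm : ∀ k i, ‖s k i‖ = 1)
    (hdist : ∀ k, ∀ i j, i ≠ j → s k i ≠ s k j)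
    (hfix : ∀ k i, ∑ j ∈ Finset.univ.erase i,
        (Γ j / ‖s k i - s k j‖ ^ 2) • cross (s k j) (s k i) = 0)
    (slim : Fin n → EuclideanSpace ℝ (Fin 3))
    (hlim : ∀ i, Filter.Tendsto (fun k => s k i) Filter.atTop (nhds (slim i)))
    (Λ : Finset (Fin n)) (hΛ : 2 ≤ Λ.card) (sstar : EuclideanSpace ℝ (Fin 3))
    (hin : ∀ i ∈ Λ, slim i = sstar) (hout : ∀ l ∉ Λ, slim l ≠ sstar) :
    ∑ i ∈ Λ, ∑ j ∈ Λ.erase i, Γ i * Γ j = 0 := by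
  have hclus : ∀ i ∈ Λ, Tendsto (fun k => s k i) atTop (𝓝 sstar) := fun i hi =>
    hin i hi ▸ hlim i
  obtain ⟨i₀, hi₀⟩ := card_pos.mp (two_pos.trans_le hΛ)
  have hstar : ⟪sstar, sstar⟫_ℝ = 1 := by
    have : ‖sstar‖ = 1 := tendsto_nhds_unique (hclus i₀ hi₀).norm
      (by simp only [hnorm, tendsto_const_nhds])
    rw [real_inner_self_eq_norm_sq, this, one_pow]
  have hself : Tendsto (fun k => ∑ i ∈ Λ, ∑ j ∈ Λ.erase i, Γ i * Γ j * ⟪s k i, sstar⟫_ℝ / 2)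
      atTop (𝓝 (∑ i ∈ Λ, ∑ j ∈ Λ.erase i, Γ i * Γ j * ⟪sstar, sstar⟫_ℝ / 2)) :=
    tendsto_finsetSum Λ fun i hi => tendsto_finsetSum _ fun j _ =>
      (((hclus i hi).inner tendsto_const_nhds).const_mul _).div_const 2
  have hext : Tendsto (fun k => ∑ i ∈ Λ, ∑ l ∈ Λᶜ, interactionAlong Γ sstar (s k) i l)
      atTop (𝓝 0) := by
    simpa only [sum_const_zero] using tendsto_finsetSum Λ fun i hi =>
      tendsto_finsetSum Λᶜ fun l hl =>
        tendsto_interactionAlong_zero Γ (hclus i hi) (hlim l) (hout l (mem_compl.mp hl)).symm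
  have hbalance := fun k => cluster_balance Γ sstar (s k) Λ (hnorm k) (hdist k) (hfix k)
  have hzero := tendsto_nhds_unique hself
    (by simpa only [eq_neg_of_add_eq_zero_left (hbalance _), neg_zero] using hext.neg)
  simpa only [hstar, mul_one, ← sum_div, div_eq_zero_iff, two_ne_zero, or_false] using hzero

/-- If a sequence of fixed-point configurations of the n-vortex problem
on the round unit sphere converges, and a cluster `Λ` (with `|Λ| ≥ 2`) of vortices
accumulates to a single point `s*` to which no vortex outside `Λ` converges, then
`∑_{i,j ∈ Λ, i ≠ j} Γ i Γ j = 0`. -/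
theorem stmt12 (n : ℕ) (Γ : Fin n → ℝ) (hΓ : ∀ i, Γ i ≠ 0)
    (s : ℕ → Fin n → EuclideanSpace ℝ (Fin 3))
    (hnorm : ∀ k i, ‖s k i‖ = 1)
    (hdist : ∀ k, ∀ i j, i ≠ j → s k i ≠ s k j)
    (hfix : ∀ k i, ∑ j ∈ Finset.univ.erase i,
        (Γ j / ‖s k i - s k j‖ ^ 2) • cross (s k j) (s k i) = 0)
    (slim : Fin n → EuclideanSpace ℝ (Fin 3))
    (hlim : ∀ i, Filter.Tendsto (fun k => s k i) Filter.atTop (nhds (slim i)))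
    (Λ : Finset (Fin n)) (hΛ : 2 ≤ Λ.card) (sstar : EuclideanSpace ℝ (Fin 3))
    (hin : ∀ i ∈ Λ, slim i = sstar) (hout : ∀ l ∉ Λ, slim l ≠ sstar) :
    ∑ i ∈ Λ, ∑ j ∈ Λ.erase i, Γ i * Γ j = 0 :=
  stmt12_general n Γ s hnorm hdist hfix slim hlim Λ hΛ sstar hin hout
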